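/- arXiv:1403.3007 — 3 statements merged into one kernel-verified Lean document; each statement's English description precedes it below -/
import Mathlib

section
/- Let S be a metric space and Z a finite collection of subsets of S. Suppose there exists a point p ∈ S such that no open ball around p is contained in any single zone of Z. If moreover for every i ∈ ℕ there exists a point pᵢ with d(pᵢ, p) < 1/(i+1) and pᵢ ∉ Z_{i mod |Z|}, and S is path-connected within small balls around p (every pair of points in a ball around p is joined by a path inside that ball), then there exists a continuous function f : [0,1] → S that cannot be covered by a finite sequence of zones: i.e., there is no finite sequence 0 = θ₀ < ... < θ_k = 1 and zones Z₀,...,Z_k with f([θᵢ, θᵢ₊₁)) ⊆ Zᵢ for all i < k and f(θ_k) ∈ Z_k. -/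
/-!
Join `pts n` to `pts (n + 1)` by a path inside the ball of radius `1 / (n + 1)` around `p`,
lay these paths end to end on the intervals `[n, n + 1]`, and compress the half-line `[0, ∞)` into
`[0, 1)` by `t ↦ t / (1 - t)`. Setting the value `p` at `1` gives a continuous trajectory, because
the `n`-th path stays within `1 / (n + 1)` of `p`. A covering by zones would put some final
interval `[θ, 1)` inside a single zone `Z j`; but at the times `n / (n + 1) ≥ θ` with
`n ≡ j (mod m)` the trajectory visits `pts n ∉ Z j`.
-/

open Set Filter Topology Metric

namespace Path

variable {X : Type*} [TopologicalSpace X] {x : ℕ → X}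

noncomputable def seqConcat (γ : ∀ n, Path (x n) (x (n + 1))) (s : ℝ) : X :=
  (γ ⌊s⌋₊).extend (s - ⌊s⌋₊)

variable (γ : ∀ n, Path (x n) (x (n + 1)))

theorem seqConcat_eq_extend {n : ℕ} {s : ℝ} (hs : s ∈ Icc (n : ℝ) (n + 1)) :
    seqConcat γ s = (γ n).extend (s - n) := by
  rcases hs.2.lt_or_eq with hlt | rfl
  · rw [seqConcat, Nat.floor_eq_on_Ico n s ⟨hs.1, hlt⟩]
  · have hfloor : ⌊(n : ℝ) + 1⌋₊ = n + 1 := mod_cast Nat.floor_natCast (n + 1)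
    simp [seqConcat, hfloor]

theorem seqConcat_natCast (n : ℕ) : seqConcat γ n = x n := by
  simp [seqConcat_eq_extend γ (n := n) ⟨le_rfl, by linarith⟩]

theorem seqConcat_mem_range (s : ℝ) : seqConcat γ s ∈ range (γ ⌊s⌋₊) := by
  rw [← extend_range]
  exact mem_range_self _

theorem continuousOn_seqConcat : ContinuousOn (seqConcat γ) (Ici 0) := by
  have hfin : LocallyFinite fun n : ℕ => Icc (n : ℝ) (n + 1) :=
    (locallyFinite_Icc_of_tendsto (f := fun k : ℤ => (k : ℝ)) (g := fun k => (k : ℝ) + 1)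
      tendsto_intCast_atTop_atTop
      (tendsto_atBot_add_const_right _ _ (tendsto_intCast_atBot_iff.2 tendsto_id))
      ).comp_injective Nat.cast_injective
  refine (hfin.continuousOn_iUnion (fun _ => isClosed_Icc) fun n => ?_).mono fun s hs => ?_
  · exact ((γ n).continuous_extend.comp (continuous_sub_right (n : ℝ))).continuousOn.congr
      fun s hs => seqConcat_eq_extend γ hs
  · exact mem_iUnion.2 ⟨⌊s⌋₊, Nat.floor_le hs, (Nat.lt_floor_add_one s).le⟩

theorem tendsto_seqConcat {S : Type*} [PseudoMetricSpace S] {x : ℕ → S}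
    (γ : ∀ n, Path (x n) (x (n + 1))) {p : S} {r : ℕ → ℝ} (hr : Tendsto r atTop (𝓝 0))
    (hγ : ∀ n, range (γ n) ⊆ ball p (r n)) : Tendsto (seqConcat γ) atTop (𝓝 p) := by
  refine tendsto_iff_dist_tendsto_zero.2 <|
    squeeze_zero (fun _ => dist_nonneg) (fun s => ?_) (hr.comp tendsto_nat_floor_atTop)
  exact (mem_ball.1 (hγ _ (seqConcat_mem_range γ s))).le

end Path

section UnitTime

variable {X : Type*}

noncomputable def unitTimeReparam (g : ℝ → X) (p : X) (t : ℝ) : X :=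
  if t < 1 then g (t / (1 - t)) else p

theorem tendsto_div_one_sub_nhdsLT_one : Tendsto (fun t : ℝ => t / (1 - t)) (𝓝[<] 1) atTop := by
  have hden : Tendsto (fun t : ℝ => 1 - t) (𝓝[<] 1) (𝓝[>] 0) := by
    refine tendsto_nhdsWithin_iff.2
      ⟨?_, eventually_nhdsWithin_of_forall fun t ht => mem_Ioi.2 (sub_pos.2 ht)⟩
    exact tendsto_nhdsWithin_of_tendsto_nhds <| by
      simpa using (continuous_sub_left (1 : ℝ)).tendsto 1
  exact (tendsto_nhdsWithin_of_tendsto_nhds tendsto_id).pos_mul_atTop one_pos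
    hden.inv_tendsto_nhdsGT_zero

theorem unitTimeReparam_natCast_div (g : ℝ → X) (p : X) (n : ℕ) :
    unitTimeReparam g p (n / (n + 1)) = g n := by
  have hpos : (0 : ℝ) < n + 1 := by positivity
  have hlt : (n : ℝ) / (n + 1) < 1 := (div_lt_one hpos).2 (lt_add_one _)
  rw [unitTimeReparam, if_pos hlt]
  congr 1
  field_simp
  ring

theorem continuousOn_unitTimeReparam [TopologicalSpace X] {g : ℝ → X} {p : X}
    (hg : ContinuousOn g (Ici 0)) (hlim : Tendsto g atTop (𝓝 p)) :
    ContinuousOn (unitTimeReparam g p) (Icc 0 1) := by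
  have hIco : ContinuousOn (unitTimeReparam g p) (Ico 0 1) := by
    refine (hg.comp (continuousOn_id.div (continuousOn_const.sub continuousOn_id)
      fun t ht => (sub_pos.2 ht.2).ne') fun t ht => div_nonneg ht.1 (sub_pos.2 ht.2).le).congr
      fun t ht => if_pos ht.2
  intro t ht
  rcases ht.2.lt_or_eq with hlt | rfl
  · exact (hIco t ⟨ht.1, hlt⟩).mono_of_mem_nhdsWithin <| mem_of_superset
      (inter_mem_nhdsWithin _ (Iio_mem_nhds hlt)) fun s hs => ⟨hs.1.1, hs.2⟩
  · have hleft : Tendsto (unitTimeReparam g p) (𝓝[<] 1) (𝓝 p) :=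
      (hlim.comp tendsto_div_one_sub_nhdsLT_one).congr' <|
        eventually_nhdsWithin_of_forall fun t ht => (if_pos ht).symm
    have : ContinuousWithinAt (unitTimeReparam g p) (Iio 1) 1 := by
      simpa [ContinuousWithinAt, unitTimeReparam] using hleft
    exact (continuousWithinAt_Iio_iff_Iic.1 this).mono fun s hs => hs.2

end UnitTime

def CoveredByZones {S ι : Type*} (zones : ι → Set S) (f : ℝ → S) : Prop :=
  ∃ (k : ℕ) (θ : ℕ → ℝ) (zs : ℕ → Set S),
    θ 0 = 0 ∧ θ k = 1 ∧
    (∀ i < k, θ i < θ (i + 1)) ∧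
    (∀ i ≤ k, ∃ j : ι, zs i = zones j) ∧
    (∀ i < k, ∀ t ∈ Ico (θ i) (θ (i + 1)), f t ∈ zs i) ∧
    f (θ k) ∈ zs k

theorem CoveredByZones.exists_Ico_subset {S ι : Type*} {zones : ι → Set S} {f : ℝ → S}
    (h : CoveredByZones zones f) : ∃ a < 1, ∃ j, MapsTo f (Ico a 1) (zones j) := by
  obtain ⟨k, θ, zs, hθ0, hθk, hmono, hzs, hcov, -⟩ := h
  obtain ⟨k, rfl⟩ : ∃ l, k = l + 1 := Nat.exists_eq_succ_of_ne_zero <| by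
    rintro rfl
    exact zero_ne_one (hθ0.symm.trans hθk)
  obtain ⟨j, hj⟩ := hzs k k.le_succ
  refine ⟨θ k, hθk ▸ hmono k k.lt_succ_self, j, fun t ht => hj ▸ hcov k k.lt_succ_self t ?_⟩
  rwa [hθk]

theorem exists_natCast_div_mem_Ico_of_mod_eq {a : ℝ} (ha : a < 1) {m j : ℕ} (hj : j < m) :
    ∃ n : ℕ, n % m = j ∧ (n : ℝ) / (n + 1) ∈ Ico a 1 := by
  obtain ⟨n, hn, hlt⟩ := ((Nat.frequently_mod_eq hj).and_eventually
    ((tendsto_natCast_div_add_atTop (1 : ℝ)).eventually_const_lt ha)).exists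
  exact ⟨n, hn, hlt.le, (div_lt_one (by positivity)).2 (lt_add_one _)⟩

theorem trajectory_not_coverable_general
    {S : Type*} [MetricSpace S] (m : ℕ) (hm : 0 < m) (zones : Fin m → Set S)
    (p : S)
    (pts : ℕ → S)
    (hpts : ∀ i : ℕ, dist (pts i) p < 1 / ((i : ℝ) + 1) ∧
      pts i ∉ zones ⟨i % m, Nat.mod_lt i hm⟩)
    (hpath : ∀ r : ℝ, 0 < r → ∀ x ∈ Metric.ball p r, ∀ y ∈ Metric.ball p r,
      JoinedIn (Metric.ball p r) x y) :
    ∃ f : ℝ → S, ContinuousOn f (Set.Icc 0 1) ∧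
      ¬ ∃ (k : ℕ) (θ : ℕ → ℝ) (zs : ℕ → Set S),
        θ 0 = 0 ∧ θ k = 1 ∧
        (∀ i < k, θ i < θ (i + 1)) ∧
        (∀ i ≤ k, ∃ j : Fin m, zs i = zones j) ∧
        (∀ i < k, ∀ t ∈ Set.Ico (θ i) (θ (i + 1)), f t ∈ zs i) ∧
        f (θ k) ∈ zs k := by
  have hjoin : ∀ n : ℕ, JoinedIn (ball p (1 / ((n : ℝ) + 1))) (pts n) (pts (n + 1)) := fun n =>
    hpath _ (by positivity) _ (hpts n).1 _ <| (hpts (n + 1)).1.trans_le <| by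
      push_cast
      gcongr
      linarith
  let γ n := (hjoin n).somePath
  refine ⟨unitTimeReparam (Path.seqConcat γ) p, continuousOn_unitTimeReparam
    (Path.continuousOn_seqConcat γ) (Path.tendsto_seqConcat γ
      tendsto_one_div_add_atTop_nhds_zero_nat fun n => range_subset_iff.2 (hjoin n).somePath_mem),
    fun hcov => ?_⟩
  obtain ⟨a, ha, j, hj⟩ := CoveredByZones.exists_Ico_subset hcov
  obtain ⟨n, hn, ht⟩ := exists_natCast_div_mem_Ico_of_mod_eq ha j.isLt
  have hmem := hj ht
  rw [unitTimeReparam_natCast_div, Path.seqConcat_natCast] at hmem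
  obtain rfl : (⟨n % m, Nat.mod_lt n hm⟩ : Fin m) = j := Fin.ext hn
  exact (hpts n).2 hmem

/-- Theorem 1 (converse direction): if some point `p` of `S` has no open ball around it
contained in a single zone, and points `pts i` witness this while avoiding zone `i mod m`,
and `S` is path-connected within small balls around `p`, then there is a continuous
trajectory that cannot be covered by a finite sequence of zones. -/
theorem trajectory_not_coverable
    {S : Type*} [MetricSpace S] (m : ℕ) (hm : 0 < m) (zones : Fin m → Set S)
    (p : S)
    (hp : ∀ r : ℝ, 0 < r → ∀ i : Fin m, ¬ (Metric.ball p r ⊆ zones i))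
    (pts : ℕ → S)
    (hpts : ∀ i : ℕ, dist (pts i) p < 1 / ((i : ℝ) + 1) ∧
      pts i ∉ zones ⟨i % m, Nat.mod_lt i hm⟩)
    (hpath : ∀ r : ℝ, 0 < r → ∀ x ∈ Metric.ball p r, ∀ y ∈ Metric.ball p r,
      JoinedIn (Metric.ball p r) x y) :
    ∃ f : ℝ → S, ContinuousOn f (Set.Icc 0 1) ∧
      ¬ ∃ (k : ℕ) (θ : ℕ → ℝ) (zs : ℕ → Set S),
        θ 0 = 0 ∧ θ k = 1 ∧
        (∀ i < k, θ i < θ (i + 1)) ∧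
        (∀ i ≤ k, ∃ j : Fin m, zs i = zones j) ∧
        (∀ i < k, ∀ t ∈ Set.Ico (θ i) (θ (i + 1)), f t ∈ zs i) ∧
        f (θ k) ∈ zs k :=
  trajectory_not_coverable_general m hm zones p pts hpts hpath
end

section
/- Let G be a graph drawn in the Euclidean plane via an injective position map p : V(G) → ℝ², such that the drawing is planar: for any two distinct edges uv and u'v', the open line segments (p_u, p_v) and (p_{u'}, p_{v'}) do not intersect, and no vertex position lies in the open segment of a non-incident edge. Define S = ⋃ over edges uv of the closed segment [p_u, p_v], together with the points p_w for isolated vertices w, and the zone Z_u = {p_u} ∪ ⋃_{uv ∈ E(G)} [p_u, p_v]. Then each node u follows the specific geocasting principle: for every p ∈ Z_u, a node v minimizing the intrinsic distance d_S(p, p_w) over all nodes w satisfies v = u or uv ∈ E(G). -/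
/-!
A point `q` of the edge `uv` is within `‖q - p u‖` of `p u` and within `‖q - p v‖` of `p v`, going
along the edge. Conversely, `S` is covered by two closed sets, the segment `[p u, p v]` and the
union of all other edges with all vertex positions, and planarity makes these meet only in
`p u` and `p v`. A curve in `S` from `q` to a vertex position runs from the first set to the
second, so by connectedness of its image it passes through `p u` or `p v`, and its length is at
least `min ‖q - p u‖ ‖q - p v‖`. Hence the nearer endpoint of the edge is a nearest node.
-/

open scoped ENNReal

/-- The intrinsic (path-length) distance inside a subset `S` of the plane:
the infimum of the lengths (total variations) of continuous curves from `x` to `y`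
staying inside `S`. -/
noncomputable def intrinsicDist (S : Set (EuclideanSpace ℝ (Fin 2)))
    (x y : EuclideanSpace ℝ (Fin 2)) : ℝ≥0∞ :=
  ⨅ (γ : ℝ → EuclideanSpace ℝ (Fin 2)) (_ : ContinuousOn γ (Set.Icc 0 1))
    (_ : Set.MapsTo γ (Set.Icc 0 1) S) (_ : γ 0 = x) (_ : γ 1 = y),
    eVariationOn γ (Set.Icc 0 1)

open Set

theorem isCompact_segment {E : Type*} [AddCommGroup E] [Module ℝ E] [TopologicalSpace E]
    [IsTopologicalAddGroup E] [ContinuousSMul ℝ E] (a b : E) :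
    IsCompact (segment ℝ a b) := by
  rw [segment_eq_image_lineMap]
  exact isCompact_Icc.image AffineMap.lineMap_continuous

theorem ContinuousOn.exists_mem_inter_of_mapsTo_union {X : Type*} [TopologicalSpace X]
    {K C : Set X} (hK : IsClosed K) (hC : IsClosed C) {γ : ℝ → X} {a b : ℝ} (hab : a ≤ b)
    (hγ : ContinuousOn γ (Icc a b)) (hmaps : MapsTo γ (Icc a b) (K ∪ C)) (ha : γ a ∈ K)
    (hb : γ b ∈ C) : ∃ t ∈ Icc a b, γ t ∈ K ∩ C := by
  obtain ⟨_, ⟨t, ht, rfl⟩, htKC⟩ :=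
    isPreconnected_closed_iff.1 (isPreconnected_Icc.image γ hγ) K C hK hC hmaps.image_subset
      ⟨γ a, mem_image_of_mem γ (left_mem_Icc.2 hab), ha⟩
      ⟨γ b, mem_image_of_mem γ (right_mem_Icc.2 hab), hb⟩
  exact ⟨t, ht, htKC⟩

section IntrinsicDist

variable {S : Set (EuclideanSpace ℝ (Fin 2))}

theorem intrinsicDist_self {c : EuclideanSpace ℝ (Fin 2)} (hc : c ∈ S) :
    intrinsicDist S c c = 0 := by
  refine le_antisymm ?_ zero_le
  refine iInf_le_of_le (fun _ => c) <| iInf_le_of_le continuousOn_const <|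
    iInf_le_of_le (fun _ _ => hc) <| iInf_le_of_le rfl <| iInf_le_of_le rfl ?_
  exact (eVariationOn.constant_on (by simp)).le

theorem intrinsicDist_le_edist {a b : EuclideanSpace ℝ (Fin 2)} (hab : segment ℝ a b ⊆ S) :
    intrinsicDist S a b ≤ edist a b := by
  set γ : ℝ → EuclideanSpace ℝ (Fin 2) := fun t => AffineMap.lineMap a b t
  have hmaps : MapsTo γ (Icc 0 1) S := fun t ht =>
    hab (segment_eq_image_lineMap ℝ a b ▸ mem_image_of_mem γ ht)
  refine iInf_le_of_le γ <| iInf_le_of_le AffineMap.lineMap_continuous.continuousOn <|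
    iInf_le_of_le hmaps <| iInf_le_of_le (by simp [γ]) <| iInf_le_of_le (by simp [γ]) ?_
  calc eVariationOn (γ ∘ id) (Icc 0 1)
      ≤ nndist a b * eVariationOn id (Icc (0 : ℝ) 1) :=
        (lipschitzWith_lineMap a b).lipschitzOnWith.comp_eVariationOn_le (mapsTo_id _)
    _ = edist a b := by simp [eVariationOn_id_Icc]

theorem intrinsicDist_le_edist_of_mem_segment {a b q : EuclideanSpace ℝ (Fin 2)}
    (hab : segment ℝ a b ⊆ S) (hq : q ∈ segment ℝ a b) : intrinsicDist S q a ≤ edist q a :=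
  intrinsicDist_le_edist <|
    ((convex_segment a b).segment_subset hq (left_mem_segment ℝ a b)).trans hab

theorem le_intrinsicDist_of_forall_curve {x y : EuclideanSpace ℝ (Fin 2)} {r : ℝ≥0∞}
    (h : ∀ γ : ℝ → EuclideanSpace ℝ (Fin 2), ContinuousOn γ (Icc 0 1) → MapsTo γ (Icc 0 1) S →
      γ 0 = x → γ 1 = y → ∃ t ∈ Icc (0 : ℝ) 1, r ≤ edist x (γ t)) :
    r ≤ intrinsicDist S x y := by
  refine le_iInf fun γ => le_iInf fun hγ => le_iInf fun hmaps => le_iInf fun h0 =>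
    le_iInf fun h1 => ?_
  obtain ⟨t, ht, hr⟩ := h γ hγ hmaps h0 h1
  exact hr.trans (h0 ▸ eVariationOn.edist_le γ (left_mem_Icc.2 zero_le_one) ht)

/-- Every curve from `x` to `y` in `S` passes through `a` or `b`, by connectedness. -/
theorem min_edist_le_intrinsicDist_of_subset_union {K C : Set (EuclideanSpace ℝ (Fin 2))}
    (hK : IsClosed K) (hC : IsClosed C) (hS : S ⊆ K ∪ C) {a b : EuclideanSpace ℝ (Fin 2)}
    (hKC : K ∩ C ⊆ {a, b}) {x y : EuclideanSpace ℝ (Fin 2)} (hx : x ∈ K) (hy : y ∈ C) :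
    min (edist x a) (edist x b) ≤ intrinsicDist S x y := by
  refine le_intrinsicDist_of_forall_curve fun γ hγ hmaps h0 h1 => ?_
  obtain ⟨t, ht, hγt⟩ := hγ.exists_mem_inter_of_mapsTo_union hK hC zero_le_one
    (hmaps.mono_right hS) (h0 ▸ hx) (h1 ▸ hy)
  rcases hKC hγt with h | h
  · exact ⟨t, ht, h ▸ min_le_left _ _⟩
  · exact ⟨t, ht, (mem_singleton_iff.1 h) ▸ min_le_right _ _⟩

end IntrinsicDist

section Drawing

variable {V E : Type*} [NormedAddCommGroup E] [NormedSpace ℝ E] (G : SimpleGraph V)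
  (p : V → E)

def drawing : Set E :=
  (⋃ (u : V) (v : V) (_ : G.Adj u v), segment ℝ (p u) (p v)) ∪
    ⋃ (w : V) (_ : ∀ x : V, ¬ G.Adj w x), {p w}

/-- Under planarity, this is the drawing with the open segment of the edge `uv` removed. -/
def drawingWithoutEdge (u v : V) : Set E :=
  (⋃ (x : V) (y : V) (_ : G.Adj x y) (_ : s(x, y) ≠ s(u, v)), segment ℝ (p x) (p y)) ∪ range p

variable {G p}

theorem segment_subset_drawing {u v : V} (huv : G.Adj u v) :
    segment ℝ (p u) (p v) ⊆ drawing G p :=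
  fun _ hx => Or.inl (mem_iUnion₂.2 ⟨u, v, mem_iUnion.2 ⟨huv, hx⟩⟩)

theorem apply_mem_drawing (u : V) : p u ∈ drawing G p := by
  by_cases hu : ∃ v, G.Adj u v
  · obtain ⟨v, huv⟩ := hu
    exact segment_subset_drawing huv (left_mem_segment ℝ _ _)
  · push Not at hu
    exact mem_union_right _ (mem_iUnion₂.2 ⟨u, hu, rfl⟩)

theorem drawing_subset_segment_union (u v : V) :
    drawing G p ⊆ segment ℝ (p u) (p v) ∪ drawingWithoutEdge G p u v := by
  rintro x (hx | hx)
  · simp only [mem_iUnion] at hx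
    obtain ⟨x', y', hxy', hx⟩ := hx
    by_cases he : s(x', y') = s(u, v)
    · left
      rcases Sym2.eq_iff.1 he with ⟨rfl, rfl⟩ | ⟨rfl, rfl⟩
      · exact hx
      · exact segment_symm ℝ (p x') (p y') ▸ hx
    · exact Or.inr (Or.inl (mem_iUnion₂.2 ⟨x', y', mem_iUnion₂.2 ⟨hxy', he, hx⟩⟩))
  · simp only [mem_iUnion, mem_singleton_iff] at hx
    obtain ⟨w, -, rfl⟩ := hx
    exact Or.inr (Or.inr (mem_range_self w))

theorem isClosed_drawingWithoutEdge [Finite V] (u v : V) :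
    IsClosed (drawingWithoutEdge G p u v) :=
  (isClosed_iUnion_of_finite fun _ => isClosed_iUnion_of_finite fun _ =>
    isClosed_iUnion_of_finite fun _ => isClosed_iUnion_of_finite fun _ =>
      (isCompact_segment _ _).isClosed).union (finite_range p).isClosed

theorem apply_notMem_openSegment (hp : Function.Injective p)
    (hvert : ∀ u v w : V, G.Adj u v → w ≠ u → w ≠ v → p w ∉ openSegment ℝ (p u) (p v))
    {u v : V} (huv : G.Adj u v) (w : V) : p w ∉ openSegment ℝ (p u) (p v) := by
  have hne : p u ≠ p v := hp.ne huv.ne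
  by_cases hwu : w = u
  · rw [hwu, left_mem_openSegment_iff]; exact hne
  by_cases hwv : w = v
  · rw [hwv, right_mem_openSegment_iff]; exact hne
  exact hvert u v w huv hwu hwv

theorem segment_inter_drawingWithoutEdge_subset (hp : Function.Injective p)
    (hplanar : ∀ u v u' v' : V, G.Adj u v → G.Adj u' v' →
      s(u, v) ≠ s(u', v') →
      openSegment ℝ (p u) (p v) ∩ openSegment ℝ (p u') (p v') = ∅)
    (hvert : ∀ u v w : V, G.Adj u v → w ≠ u → w ≠ v → p w ∉ openSegment ℝ (p u) (p v))
    {u v : V} (huv : G.Adj u v) :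
    segment ℝ (p u) (p v) ∩ drawingWithoutEdge G p u v ⊆ {p u, p v} := by
  rintro x ⟨hx, hx'⟩
  rw [← insert_endpoints_openSegment] at hx
  refine hx.imp_right fun hx => hx.resolve_right fun hxo => ?_
  have hvo := apply_notMem_openSegment hp hvert huv
  rcases hx' with hx' | ⟨w, rfl⟩
  · simp only [mem_iUnion] at hx'
    obtain ⟨x', y', hxy', he, hx'⟩ := hx'
    rw [← insert_endpoints_openSegment] at hx'
    rcases hx' with rfl | rfl | hx'
    · exact hvo x' hxo
    · exact hvo y' hxo
    · exact (hplanar u v x' y' huv hxy' (Ne.symm he)).subset ⟨hxo, hx'⟩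
  · exact hvo w hxo

end Drawing

theorem min_edist_le_intrinsicDist_drawing {V : Type*} [Finite V] {G : SimpleGraph V}
    {p : V → EuclideanSpace ℝ (Fin 2)} (hp : Function.Injective p)
    (hplanar : ∀ u v u' v' : V, G.Adj u v → G.Adj u' v' →
      s(u, v) ≠ s(u', v') →
      openSegment ℝ (p u) (p v) ∩ openSegment ℝ (p u') (p v') = ∅)
    (hvert : ∀ u v w : V, G.Adj u v → w ≠ u → w ≠ v → p w ∉ openSegment ℝ (p u) (p v))
    {u v : V} (huv : G.Adj u v) {q : EuclideanSpace ℝ (Fin 2)}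
    (hq : q ∈ segment ℝ (p u) (p v)) (w : V) :
    min (edist q (p u)) (edist q (p v)) ≤ intrinsicDist (drawing G p) q (p w) :=
  min_edist_le_intrinsicDist_of_subset_union (isCompact_segment _ _).isClosed
    (isClosed_drawingWithoutEdge u v) (drawing_subset_segment_union u v)
    (segment_inter_drawingWithoutEdge_subset hp hplanar hvert huv) hq (Or.inr (mem_range_self w))

/-- in a planar straight-line embedding of a graph `G`, with
`S` the union of the edge segments (and isolated vertex positions) and
`Z_u = {p_u} ∪ ⋃_{uv ∈ E(G)} [p_u, p_v]`, each node `u` follows the specific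
geocasting principle: for every point of `Z_u`, some node minimizing the
intrinsic distance in `S` is `u` itself or a neighbor of `u`. -/
theorem planar_specific_geocasting
    {V : Type*} [Fintype V] (G : SimpleGraph V)
    (p : V → EuclideanSpace ℝ (Fin 2)) (hp : Function.Injective p)
    (hplanar : ∀ u v u' v' : V, G.Adj u v → G.Adj u' v' →
      s(u, v) ≠ s(u', v') →
      openSegment ℝ (p u) (p v) ∩ openSegment ℝ (p u') (p v') = ∅)
    (hvert : ∀ u v w : V, G.Adj u v → w ≠ u → w ≠ v →
      p w ∉ openSegment ℝ (p u) (p v))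
    (S : Set (EuclideanSpace ℝ (Fin 2)))
    (hS : S = (⋃ (u : V) (v : V) (_ : G.Adj u v), segment ℝ (p u) (p v)) ∪
      (⋃ (w : V) (_ : ∀ x : V, ¬ G.Adj w x), {p w}))
    (Z : V → Set (EuclideanSpace ℝ (Fin 2)))
    (hZ : ∀ u, Z u = {p u} ∪ ⋃ (v : V) (_ : G.Adj u v), segment ℝ (p u) (p v))
    (u : V) :
    ∀ q ∈ Z u, ∃ v : V,
      (∀ w : V, intrinsicDist S q (p v) ≤ intrinsicDist S q (p w)) ∧
      (v = u ∨ G.Adj u v) := by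
  intro q hq
  change S = drawing G p at hS
  subst hS
  simp only [hZ, mem_union, mem_singleton_iff, mem_iUnion] at hq
  rcases hq with rfl | ⟨v, huv, hq⟩
  · refine ⟨u, fun w => ?_, Or.inl rfl⟩
    rw [intrinsicDist_self (apply_mem_drawing u)]
    exact zero_le
  have hlow := min_edist_le_intrinsicDist_drawing hp hplanar hvert huv hq
  rcases le_total (edist q (p u)) (edist q (p v)) with hu | hv
  · refine ⟨u, fun w => ?_, Or.inl rfl⟩
    exact (intrinsicDist_le_edist_of_mem_segment (segment_subset_drawing huv) hq).trans
      (min_eq_left hu ▸ hlow w)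
  · refine ⟨v, fun w => ?_, Or.inr huv⟩
    rw [segment_symm] at hq
    exact (intrinsicDist_le_edist_of_mem_segment (segment_subset_drawing huv.symm) hq).trans
      (min_eq_right hv ▸ hlow w)
end

section
/- Let u, v be points in ℝ² and let p be a point on the closed segment [u, v]. If w ∈ ℝ² satisfies d(p, w) < d(p, u) and d(p, w) < d(p, v), then w lies in the open disc whose diameter is the segment (u, v); equivalently, d(u, w)² + d(v, w)² < d(u, v)². -/
/-!
If `p` lies on `[u, v]`, then `dist p m + min (dist p u) (dist p v) = dist u v / 2` for the
midpoint `m`, so the ball around `p` of radius `min (dist p u) (dist p v)` lies inside the open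
disc of diameter `(u, v)`. Inside that disc, Apollonius' identity
`dist w u² + dist w v² = 2 dist w m² + dist u v² / 2` gives `dist u w² + dist v w² < dist u v²`,
and `dist u w² + dist v w² - dist u v² = 2 ⟪w - u, w - v⟫`.
-/

open scoped RealInnerProductSpace

open AffineMap Metric

theorem ball_min_dist_subset_ball_midpoint {E : Type*} [NormedAddCommGroup E] [NormedSpace ℝ E]
    {u v p : E} (hp : p ∈ segment ℝ u v) :
    ball p (min (dist p u) (dist p v)) ⊆ ball (midpoint ℝ u v) (dist u v / 2) := by
  rw [segment_eq_image_lineMap] at hp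
  obtain ⟨t, ⟨ht₀, ht₁⟩, rfl⟩ := hp
  apply ball_subset_ball'
  rw [midpoint, dist_lineMap_lineMap, dist_lineMap_left, dist_lineMap_right, Real.dist_eq,
    Real.norm_of_nonneg ht₀, Real.norm_of_nonneg (sub_nonneg.2 ht₁), invOf_eq_inv]
  rcases le_total t 2⁻¹ with ht | ht
  · rw [abs_of_nonpos (by linarith)]
    nlinarith [min_le_left (t * dist u v) ((1 - t) * dist u v), dist_nonneg (x := u) (y := v)]
  · rw [abs_of_nonneg (by linarith)]
    nlinarith [min_le_right (t * dist u v) ((1 - t) * dist u v), dist_nonneg (x := u) (y := v)]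

theorem dist_sq_add_dist_sq_eq_dist_sq_add_two_mul_inner {E : Type*} [NormedAddCommGroup E]
    [InnerProductSpace ℝ E] (u v w : E) :
    dist u w ^ 2 + dist v w ^ 2 = dist u v ^ 2 + 2 * ⟪w - u, w - v⟫ := by
  rw [real_inner_eq_norm_mul_self_add_norm_mul_self_sub_norm_sub_mul_self_div_two,
    sub_sub_sub_cancel_left, dist_comm u w, dist_comm v w, dist_comm u v, dist_eq_norm,
    dist_eq_norm, dist_eq_norm]
  ring

theorem dist_sq_add_dist_sq_lt_of_mem_ball_midpoint {E : Type*} [NormedAddCommGroup E]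
    [InnerProductSpace ℝ E] {u v w : E} (hw : w ∈ ball (midpoint ℝ u v) (dist u v / 2)) :
    dist u w ^ 2 + dist v w ^ 2 < dist u v ^ 2 := by
  have hwm : dist w (midpoint ℝ u v) < dist u v / 2 := hw
  rw [dist_comm u w, dist_comm v w,
    EuclideanGeometry.dist_sq_add_dist_sq_eq_two_mul_dist_midpoint_sq_add_half_dist_sq]
  nlinarith [dist_nonneg (x := w) (y := midpoint ℝ u v)]

/-- A point `w` strictly closer to some point `p` of the segment `[u, v]` than to both
endpoints lies in the open disc of diameter `(u, v)`: the angle at `w` is obtuse, i.e.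
`⟪w - u, w - v⟫ < 0`, equivalently `d(u,w)² + d(v,w)² < d(u,v)²`. -/
theorem closer_point_in_open_disc
    (u v p w : EuclideanSpace ℝ (Fin 2))
    (hp : p ∈ segment ℝ u v)
    (hwu : dist p w < dist p u) (hwv : dist p w < dist p v) :
    ⟪w - u, w - v⟫ < 0 ∧
      dist u w ^ 2 + dist v w ^ 2 < dist u v ^ 2 := by
  have hw : w ∈ ball (midpoint ℝ u v) (dist u v / 2) :=
    ball_min_dist_subset_ball_midpoint hp (by rw [mem_ball, dist_comm]; exact lt_min hwu hwv)
  have hdisc := dist_sq_add_dist_sq_lt_of_mem_ball_midpoint hw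
  exact ⟨by linarith [dist_sq_add_dist_sq_eq_dist_sq_add_two_mul_inner u v w], hdisc⟩
end
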